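/- arXiv:2003.12983 — 3 statements merged into one kernel-verified Lean document; each statement's English description precedes it below -/
import Mathlib

section
/- Let β > 0, τ > 0 and L ≥ 0 be real numbers. Let M_Ω ∈ ℝ^{n_Ω×n_Ω} be diagonal with positive diagonal entries, let M_Γ ∈ ℝ^{n_Γ×n_Γ} be symmetric positive definite, and let L_Ω ∈ ℝ^{n_Ω×n_Ω} and L_Γ ∈ ℝ^{n_Γ×n_Γ} be arbitrary real matrices. Suppose U, U⁻, μ ∈ ℝ^{n_Ω} and θ ∈ ℝ^{n_Γ} satisfy the compatibility condition (L/(L+1))·(M_Ω|_{ΓΓ})⁻¹·(L_Ω μ)|_Γ − (1/(L+1))·(M_Ω|_{ΓΓ})⁻¹·M_Γ·(βθ − μ|_Γ) = (L/(L+1))·M_Γ⁻¹·L_Γ·θ + β·(1/(L+1))·(βθ − μ|_Γ) and the combined discrete equation M_Ω(U − U⁻) + β⁻¹·ext(M_Γ(U|_Γ − U⁻|_Γ)) + τ·L_Ω·μ + τ·β⁻¹·ext(L_Γ·θ) = 0. Then the boundary equation holds individually: β⁻¹·(L/(L+1))·M_Γ·(U|_Γ − U⁻|_Γ) + τ·β⁻¹·(L/(L+1))·L_Γ·θ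 + τ·(1/(L+1))·M_Γ·(βθ − μ|_Γ) = 0. -/
/-!
Write the residual of the boundary equation as `M_Γ h`. Restricting the combined equation to
the boundary rows and multiplying the compatibility condition by the boundary block `D` of the
diagonal matrix `M_Ω` gives `M_Γ h = -β D h`. Since `M_Γ + β D` is positive definite, `h = 0`.
-/

open Matrix

/-- Restriction of a bulk vector (indexed by `Fin nΓ ⊕ Fin nI`, boundary
coordinates first) to its boundary coordinates. -/
def restrΓ {nΓ nI : ℕ} (v : Fin nΓ ⊕ Fin nI → ℝ) : Fin nΓ → ℝ := fun i => v (Sum.inl i)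

def extΩ {nΓ nI : ℕ} (x : Fin nΓ → ℝ) : Fin nΓ ⊕ Fin nI → ℝ := Sum.elim x 0

namespace Matrix

variable {n : Type*} [Fintype n] [DecidableEq n]

theorem mulVec_nonsing_inv_mulVec {α : Type*} [CommRing α] {A : Matrix n n α}
    (hA : IsUnit A.det) (v : n → α) : A *ᵥ (A⁻¹ *ᵥ v) = v := by
  rw [mulVec_mulVec, mul_nonsing_inv A hA, one_mulVec]

theorem PosDef.eq_zero_of_mulVec_add_diagonal_mulVec_eq_zero {M : Matrix n n ℝ}
    (hM : M.PosDef) {d : n → ℝ} (hd : 0 ≤ d) {x : n → ℝ}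
    (hx : M *ᵥ x + diagonal d *ᵥ x = 0) : x = 0 := by
  have hMd : (M + diagonal d).PosDef := hM.add_posSemidef (.diagonal hd)
  refine mulVec_injective_of_isUnit hMd.isUnit ?_
  rw [add_mulVec, hx, mulVec_zero]

end Matrix

section Restriction

variable {nΓ nI : ℕ}

@[simp]
theorem restrΓ_add (v w : Fin nΓ ⊕ Fin nI → ℝ) : restrΓ (v + w) = restrΓ v + restrΓ w := rfl

@[simp]
theorem restrΓ_sub (v w : Fin nΓ ⊕ Fin nI → ℝ) : restrΓ (v - w) = restrΓ v - restrΓ w := rfl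

@[simp]
theorem restrΓ_smul (c : ℝ) (v : Fin nΓ ⊕ Fin nI → ℝ) : restrΓ (c • v) = c • restrΓ v := rfl

@[simp]
theorem restrΓ_zero : restrΓ (0 : Fin nΓ ⊕ Fin nI → ℝ) = 0 := rfl

@[simp]
theorem restrΓ_extΩ (x : Fin nΓ → ℝ) : restrΓ (extΩ x : Fin nΓ ⊕ Fin nI → ℝ) = x := rfl

theorem restrΓ_diagonal_mulVec (d v : Fin nΓ ⊕ Fin nI → ℝ) :
    restrΓ (diagonal d *ᵥ v) = diagonal (restrΓ d) *ᵥ restrΓ v := by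
  ext i
  simp only [restrΓ, mulVec_diagonal]

end Restriction

theorem boundary_equation_of_boundary_rows {n : Type*} [Fintype n] [DecidableEq n]
    {β τ s t : ℝ} (hβ : 0 < β) {M : Matrix n n ℝ} (hM : M.PosDef)
    {d : n → ℝ} (hd : 0 ≤ d) {w b c g : n → ℝ}
    (hrows : diagonal d *ᵥ w + β⁻¹ • M *ᵥ w + τ • b + (τ * β⁻¹) • g = 0)
    (hcompat : s • b - t • M *ᵥ c = diagonal d *ᵥ (s • M⁻¹ *ᵥ g + (β * t) • c)) :
    (β⁻¹ * s) • M *ᵥ w + (τ * β⁻¹ * s) • g + (τ * t) • M *ᵥ c = 0 := by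
  have hMg : M *ᵥ (M⁻¹ *ᵥ g) = g :=
    mulVec_nonsing_inv_mulVec ((isUnit_iff_isUnit_det M).1 hM.isUnit) g
  set h := (β⁻¹ * s) • w + (τ * β⁻¹ * s) • M⁻¹ *ᵥ g + (τ * t) • c
  have hMh : M *ᵥ h = (β⁻¹ * s) • M *ᵥ w + (τ * β⁻¹ * s) • g + (τ * t) • M *ᵥ c := by
    simp only [h, mulVec_add, mulVec_smul, hMg]
  have hkernel : M *ᵥ h + diagonal (β • d) *ᵥ h = 0 := by
    simp only [hMh, diagonal_smul, smul_mulVec, h, mulVec_add, mulVec_smul] at hcompat ⊢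
    linear_combination (norm := match_scalars <;> field_simp <;> ring) s • hrows - τ • hcompat
  rw [← hMh, hM.eq_zero_of_mulVec_add_diagonal_mulVec_eq_zero (smul_nonneg hβ.le hd) hkernel,
    mulVec_zero]

theorem boundary_equation_individually_general (nΓ nI : ℕ)
    (β τ L : ℝ) (hβ : 0 < β)
    (MΩ : Matrix (Fin nΓ ⊕ Fin nI) (Fin nΓ ⊕ Fin nI) ℝ)
    (dΩ : Fin nΓ ⊕ Fin nI → ℝ) (hdΩ : ∀ i, 0 < dΩ i) (hMΩ : MΩ = Matrix.diagonal dΩ)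
    (MΓ : Matrix (Fin nΓ) (Fin nΓ) ℝ) (hMΓ : MΓ.PosDef)
    (LΩ : Matrix (Fin nΓ ⊕ Fin nI) (Fin nΓ ⊕ Fin nI) ℝ)
    (LΓ : Matrix (Fin nΓ) (Fin nΓ) ℝ)
    (U U' μ : Fin nΓ ⊕ Fin nI → ℝ) (θ : Fin nΓ → ℝ)
    -- compatibility condition (5.8)
    (compat :
      (L / (L + 1)) • (MΩ.submatrix Sum.inl Sum.inl)⁻¹.mulVec (restrΓ (LΩ.mulVec μ))
        - (1 / (L + 1)) • (MΩ.submatrix Sum.inl Sum.inl)⁻¹.mulVec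
            (MΓ.mulVec (β • θ - restrΓ μ))
      = (L / (L + 1)) • MΓ⁻¹.mulVec (LΓ.mulVec θ)
        + (β * (1 / (L + 1))) • (β • θ - restrΓ μ))
    -- combined discrete equation (5.16)
    (combined :
      MΩ.mulVec (U - U') + β⁻¹ • extΩ (MΓ.mulVec (restrΓ U - restrΓ U'))
        + τ • LΩ.mulVec μ + (τ * β⁻¹) • extΩ (LΓ.mulVec θ) = 0) :
    -- boundary equation (5.19)
    (β⁻¹ * (L / (L + 1))) • MΓ.mulVec (restrΓ U - restrΓ U')
      + (τ * β⁻¹ * (L / (L + 1))) • LΓ.mulVec θ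
      + (τ * (1 / (L + 1))) • MΓ.mulVec (β • θ - restrΓ μ) = 0 := by
  set D := diagonal (restrΓ dΩ)
  have hD : MΩ.submatrix Sum.inl Sum.inl = D := hMΩ ▸ submatrix_diagonal _ _ Sum.inl_injective
  have hDpos : D.PosDef := posDef_diagonal_iff.2 fun _ => hdΩ _
  have hrows := congrArg restrΓ combined
  simp only [hMΩ, restrΓ_add, restrΓ_sub, restrΓ_smul, restrΓ_extΩ, restrΓ_diagonal_mulVec,
    restrΓ_zero] at hrows
  have hcompat := congrArg (D *ᵥ ·) compat
  have hDinv := mulVec_nonsing_inv_mulVec ((isUnit_iff_isUnit_det D).1 hDpos.isUnit)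
  rw [hD, mulVec_sub, mulVec_smul, mulVec_smul, hDinv, hDinv] at hcompat
  exact boundary_equation_of_boundary_rows hβ hMΓ (fun _ => (hdΩ _).le) hrows hcompat

/-- Lemma 5.3 of the paper. If `(U, μ, θ)` satisfies the
compatibility condition (5.8) and the combined discrete equation (5.16), then
the boundary evolution equation (5.19) holds individually. Here `M_Ω` is
diagonal with positive diagonal entries, `M_Γ` is symmetric positive definite,
and `L_Ω`, `L_Γ` are arbitrary. -/
theorem boundary_equation_individually (nΓ nI : ℕ) (hnΓ : 1 ≤ nΓ)
    (β τ L : ℝ) (hβ : 0 < β) (hτ : 0 < τ) (hL : 0 ≤ L)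
    (MΩ : Matrix (Fin nΓ ⊕ Fin nI) (Fin nΓ ⊕ Fin nI) ℝ)
    (dΩ : Fin nΓ ⊕ Fin nI → ℝ) (hdΩ : ∀ i, 0 < dΩ i) (hMΩ : MΩ = Matrix.diagonal dΩ)
    (MΓ : Matrix (Fin nΓ) (Fin nΓ) ℝ) (hMΓ : MΓ.PosDef)
    (LΩ : Matrix (Fin nΓ ⊕ Fin nI) (Fin nΓ ⊕ Fin nI) ℝ)
    (LΓ : Matrix (Fin nΓ) (Fin nΓ) ℝ)
    (U U' μ : Fin nΓ ⊕ Fin nI → ℝ) (θ : Fin nΓ → ℝ)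
    -- compatibility condition (5.8)
    (compat :
      (L / (L + 1)) • (MΩ.submatrix Sum.inl Sum.inl)⁻¹.mulVec (restrΓ (LΩ.mulVec μ))
        - (1 / (L + 1)) • (MΩ.submatrix Sum.inl Sum.inl)⁻¹.mulVec
            (MΓ.mulVec (β • θ - restrΓ μ))
      = (L / (L + 1)) • MΓ⁻¹.mulVec (LΓ.mulVec θ)
        + (β * (1 / (L + 1))) • (β • θ - restrΓ μ))
    -- combined discrete equation (5.16)
    (combined :
      MΩ.mulVec (U - U') + β⁻¹ • extΩ (MΓ.mulVec (restrΓ U - restrΓ U'))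
        + τ • LΩ.mulVec μ + (τ * β⁻¹) • extΩ (LΓ.mulVec θ) = 0) :
    -- boundary equation (5.19)
    (β⁻¹ * (L / (L + 1))) • MΓ.mulVec (restrΓ U - restrΓ U')
      + (τ * β⁻¹ * (L / (L + 1))) • LΓ.mulVec θ
      + (τ * (1 / (L + 1))) • MΓ.mulVec (β • θ - restrΓ μ) = 0 :=
  boundary_equation_individually_general nΓ nI β τ L hβ MΩ dΩ hdΩ hMΩ MΓ hMΓ LΩ LΓ U U' μ θ compat
    combined
end

section
/- Let β ≠ 0 and τ > 0 be real numbers, let M_Ω ∈ ℝ^{n_Ω×n_Ω} and M_Γ ∈ ℝ^{n_Γ×n_Γ} be arbitrary real matrices, and let L_Ω ∈ ℝ^{n_Ω×n_Ω} and L_Γ ∈ ℝ^{n_Γ×n_Γ} be symmetric matrices satisfying L_Ω·𝟙 = 0 and L_Γ·𝟙 = 0 (the all-ones vectors lie in their kernels). If U, U⁻, μ ∈ ℝ^{n_Ω} and θ ∈ ℝ^{n_Γ} satisfy the combined discrete equation M_Ω(U − U⁻) + β⁻¹·ext(M_Γ(U|_Γ − U⁻|_Γ)) + τ·L_Ω·μ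 + τ·β⁻¹·ext(L_Γ·θ) = 0, then the weighted discrete total mass is conserved: 𝟙ᵀM_Ω·U + β⁻¹·𝟙ᵀM_Γ·(U|_Γ) = 𝟙ᵀM_Ω·U⁻ + β⁻¹·𝟙ᵀM_Γ·(U⁻|_Γ). -/
/- Pairing the combined equation with 𝟙 kills both stiffness terms, since a symmetric matrix
annihilating 𝟙 has 𝟙 in the kernel of its transpose as well; pairing 𝟙 with a zero extension
only sees the boundary block, so what is left is the difference of the weighted masses. -/

open Matrix

theorem dotProduct_extΩ {nΓ nI : ℕ} (v : Fin nΓ ⊕ Fin nI → ℝ) (x : Fin nΓ → ℝ) :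
    v ⬝ᵥ extΩ x = restrΓ v ⬝ᵥ x := by
  simp [dotProduct, extΩ, restrΓ, Fintype.sum_sum_type]

@[simp]
theorem restrΓ_const {nΓ nI : ℕ} (c : ℝ) :
    restrΓ (fun _ : Fin nΓ ⊕ Fin nI => c) = fun _ => c :=
  rfl

theorem dotProduct_mulVec_eq_zero_of_isSymm {n R : Type*} [Fintype n] [CommSemiring R]
    {L : Matrix n n R} (hL : L.IsSymm) {v : n → R} (hv : L *ᵥ v = 0) (x : n → R) :
    v ⬝ᵥ L *ᵥ x = 0 := by
  rw [dotProduct_mulVec, ← mulVec_transpose, hL.eq, hv, zero_dotProduct]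

theorem discrete_mass_conservation_general (nΓ nI : ℕ)
    (β τ : ℝ)
    (MΩ : Matrix (Fin nΓ ⊕ Fin nI) (Fin nΓ ⊕ Fin nI) ℝ)
    (MΓ : Matrix (Fin nΓ) (Fin nΓ) ℝ)
    (LΩ : Matrix (Fin nΓ ⊕ Fin nI) (Fin nΓ ⊕ Fin nI) ℝ)
    (LΓ : Matrix (Fin nΓ) (Fin nΓ) ℝ)
    (hLΩsymm : LΩ.IsSymm) (hLΓsymm : LΓ.IsSymm)
    (hLΩones : LΩ.mulVec (fun _ => (1 : ℝ)) = 0)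
    (hLΓones : LΓ.mulVec (fun _ => (1 : ℝ)) = 0)
    (U U' μ : Fin nΓ ⊕ Fin nI → ℝ) (θ : Fin nΓ → ℝ)
    (hcombined : MΩ.mulVec (U - U') + β⁻¹ • extΩ (MΓ.mulVec (restrΓ U - restrΓ U'))
        + τ • LΩ.mulVec μ + (τ * β⁻¹) • extΩ (LΓ.mulVec θ) = 0) :
    (fun _ => (1 : ℝ)) ⬝ᵥ MΩ.mulVec U + β⁻¹ * ((fun _ => (1 : ℝ)) ⬝ᵥ MΓ.mulVec (restrΓ U))
      = (fun _ => (1 : ℝ)) ⬝ᵥ MΩ.mulVec U' + β⁻¹ * ((fun _ => (1 : ℝ)) ⬝ᵥ MΓ.mulVec (restrΓ U')) := by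
  have hmass := congrArg ((fun _ => (1 : ℝ)) ⬝ᵥ ·) hcombined
  simp only [dotProduct_add, dotProduct_smul, smul_eq_mul, dotProduct_zero, dotProduct_extΩ,
    restrΓ_const, dotProduct_mulVec_eq_zero_of_isSymm hLΩsymm hLΩones,
    dotProduct_mulVec_eq_zero_of_isSymm hLΓsymm hLΓones, mulVec_sub, dotProduct_sub] at hmass
  linarith

/-- discrete mass conservation, eq. (5.29) of the paper.
If the stiffness matrices `L_Ω`, `L_Γ` are symmetric and annihilate the
all-ones vectors, then the combined discrete equation implies conservation of
the weighted discrete total mass `𝟙ᵀM_Ω·U + β⁻¹·𝟙ᵀM_Γ·U|_Γ`. -/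
theorem discrete_mass_conservation (nΓ nI : ℕ) (hnΓ : 1 ≤ nΓ)
    (β τ : ℝ) (hβ : β ≠ 0) (hτ : 0 < τ)
    (MΩ : Matrix (Fin nΓ ⊕ Fin nI) (Fin nΓ ⊕ Fin nI) ℝ)
    (MΓ : Matrix (Fin nΓ) (Fin nΓ) ℝ)
    (LΩ : Matrix (Fin nΓ ⊕ Fin nI) (Fin nΓ ⊕ Fin nI) ℝ)
    (LΓ : Matrix (Fin nΓ) (Fin nΓ) ℝ)
    (hLΩsymm : LΩ.IsSymm) (hLΓsymm : LΓ.IsSymm)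
    (hLΩones : LΩ.mulVec (fun _ => (1 : ℝ)) = 0)
    (hLΓones : LΓ.mulVec (fun _ => (1 : ℝ)) = 0)
    (U U' μ : Fin nΓ ⊕ Fin nI → ℝ) (θ : Fin nΓ → ℝ)
    (hcombined : MΩ.mulVec (U - U') + β⁻¹ • extΩ (MΓ.mulVec (restrΓ U - restrΓ U'))
        + τ • LΩ.mulVec μ + (τ * β⁻¹) • extΩ (LΓ.mulVec θ) = 0) :
    (fun _ => (1 : ℝ)) ⬝ᵥ MΩ.mulVec U + β⁻¹ * ((fun _ => (1 : ℝ)) ⬝ᵥ MΓ.mulVec (restrΓ U))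
      = (fun _ => (1 : ℝ)) ⬝ᵥ MΩ.mulVec U' + β⁻¹ * ((fun _ => (1 : ℝ)) ⬝ᵥ MΓ.mulVec (restrΓ U')) :=
  discrete_mass_conservation_general nΓ nI β τ MΩ MΓ LΩ LΓ hLΩsymm hLΓsymm hLΩones hLΓones U U' μ θ
    hcombined
end

section
/- Let β > 0 and L ≥ 0 be real numbers and set λ := 1/(L+1), so 1 − λ = L/(L+1). Let M_Ω ∈ ℝ^{n_Ω×n_Ω} be diagonal with positive diagonal entries, with boundary block D := M_Ω|_{ΓΓ} and interior block D_I := M_Ω|_{II}, let M_Γ ∈ ℝ^{n_Γ×n_Γ} be symmetric positive definite, and let L_Ω ∈ ℝ^{n_Ω×n_Ω} and L_Γ ∈ ℝ^{n_Γ×n_Γ} be arbitrary real matrices. Define A := (1−λ)·D⁻¹·L_Ω|_{ΓΓ} + λ·D⁻¹·M_Γ + β·λ·Id, B := (1−λ)·D⁻¹·L_Ω|_{ΓI}, C := (1−λ)·M_Γ⁻¹·L_Γ + β·λ·D⁻¹·M_Γ + β²·λ·Id, and N := D·A + D·C·M_Γ⁻¹·D, and assume N is invertible. Given R_Γ ∈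 ℝ^{n_Γ} and R_I ∈ ℝ^{n_I}, define μ_Γ := N⁻¹·(−D·B·D_I⁻¹·R_I + D·C·M_Γ⁻¹·R_Γ), μ_I := D_I⁻¹·R_I, μ := (μ_Γ, μ_I) ∈ ℝ^{n_Ω}, and θ := −M_Γ⁻¹·D·μ_Γ + M_Γ⁻¹·R_Γ ∈ ℝ^{n_Γ}. Then μ and θ satisfy the compatibility condition: (1−λ)·D⁻¹·(L_Ω·μ)|_Γ − λ·D⁻¹·M_Γ·(βθ − μ_Γ) = (1−λ)·M_Γ⁻¹·L_Γ·θ + β·λ·(βθ − μ_Γ). -/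
/-!
Expanding `A`, `B`, `C` and the block structure of `L_Ω μ`, the compatibility condition is
`A μ_Γ + B μ_I = C θ`. Substituting `θ`, `D` times the difference of the two sides is
`N μ_Γ + D B μ_I - D C M_Γ⁻¹ R_Γ`, which vanishes by the choice of `μ_Γ`; and `D` is
invertible, being a positive diagonal block of `M_Ω`.
-/

open Matrix

namespace Matrix

variable {R : Type*} [CommRing R] {m n : Type*} [Fintype m] [DecidableEq m] [Fintype n]

theorem mulVec_nonsing_inv_mulVec_s13 {N : Matrix m m R} (hN : IsUnit N) (v : m → R) :
    N *ᵥ (N⁻¹ *ᵥ v) = v := by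
  rw [mulVec_mulVec, mul_nonsing_inv N ((isUnit_iff_isUnit_det N).1 hN), one_mulVec]

theorem mulVec_add_mulVec_eq_of_schur_complement {A C P D : Matrix m m R}
    {B : Matrix m n R} (hD : IsUnit D) {μ r : m → R} {x : n → R}
    (hμ : (D * A + D * C * P * D) *ᵥ μ = -((D * B) *ᵥ x) + (D * C * P) *ᵥ r) :
    A *ᵥ μ + B *ᵥ x = C *ᵥ (-((P * D) *ᵥ μ) + P *ᵥ r) := by
  apply mulVec_injective_of_isUnit hD
  simp only [add_mulVec, mulVec_add, mulVec_neg, mulVec_mulVec, ← Matrix.mul_assoc] at hμ ⊢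
  linear_combination hμ

end Matrix

theorem restrΓ_mulVec_sum_elim {nΓ nI : ℕ} {m n : Type*} [Fintype m] [Fintype n]
    (M : Matrix (Fin nΓ ⊕ Fin nI) (m ⊕ n) ℝ) (x : m → ℝ) (y : n → ℝ) :
    restrΓ (M *ᵥ Sum.elim x y)
      = M.submatrix Sum.inl Sum.inl *ᵥ x + M.submatrix Sum.inl Sum.inr *ᵥ y := by
  ext i
  simp [restrΓ, mulVec, dotProduct, Fintype.sum_sum_type]

theorem schur_solution_satisfies_compatibility_general (nΓ nI : ℕ)
    (β lam : ℝ)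
    (MΩ : Matrix (Fin nΓ ⊕ Fin nI) (Fin nΓ ⊕ Fin nI) ℝ)
    (dΩ : Fin nΓ ⊕ Fin nI → ℝ) (hdΩ : ∀ i, 0 < dΩ i) (hMΩ : MΩ = Matrix.diagonal dΩ)
    (MΓ : Matrix (Fin nΓ) (Fin nΓ) ℝ)
    (LΩ : Matrix (Fin nΓ ⊕ Fin nI) (Fin nΓ ⊕ Fin nI) ℝ)
    (LΓ : Matrix (Fin nΓ) (Fin nΓ) ℝ)
    -- boundary and interior blocks of the bulk mass matrix
    (D : Matrix (Fin nΓ) (Fin nΓ) ℝ) (hD : D = MΩ.submatrix Sum.inl Sum.inl)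
    (DI : Matrix (Fin nI) (Fin nI) ℝ)
    -- the matrices A, B, C of the compatibility condition (5.9)–(5.10)
    (A : Matrix (Fin nΓ) (Fin nΓ) ℝ)
    (hA : A = (1 - lam) • (D⁻¹ * LΩ.submatrix Sum.inl Sum.inl)
        + lam • (D⁻¹ * MΓ) + (β * lam) • (1 : Matrix (Fin nΓ) (Fin nΓ) ℝ))
    (B : Matrix (Fin nΓ) (Fin nI) ℝ)
    (hB : B = (1 - lam) • (D⁻¹ * LΩ.submatrix Sum.inl Sum.inr))
    (C : Matrix (Fin nΓ) (Fin nΓ) ℝ)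
    (hC : C = (1 - lam) • (MΓ⁻¹ * LΓ) + (β * lam) • (D⁻¹ * MΓ)
        + (β ^ 2 * lam) • (1 : Matrix (Fin nΓ) (Fin nΓ) ℝ))
    -- the Schur complement N, assumed invertible
    (Nmat : Matrix (Fin nΓ) (Fin nΓ) ℝ)
    (hNmat : Nmat = D * A + D * C * MΓ⁻¹ * D) (hNunit : IsUnit Nmat)
    -- right-hand sides and the explicit expressions for μ and θ
    (RΓ : Fin nΓ → ℝ) (RI : Fin nI → ℝ)
    (μΓ : Fin nΓ → ℝ)
    (hμΓ : μΓ = Nmat⁻¹.mulVec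
        (-(D * B * DI⁻¹).mulVec RI + (D * C * MΓ⁻¹).mulVec RΓ))
    (μI : Fin nI → ℝ) (hμI : μI = DI⁻¹.mulVec RI)
    (μ : Fin nΓ ⊕ Fin nI → ℝ) (hμ : μ = Sum.elim μΓ μI)
    (θ : Fin nΓ → ℝ)
    (hθ : θ = -(MΓ⁻¹ * D).mulVec μΓ + MΓ⁻¹.mulVec RΓ) :
    -- the compatibility condition (5.8)
    (1 - lam) • D⁻¹.mulVec (restrΓ (LΩ.mulVec μ))
        - lam • D⁻¹.mulVec (MΓ.mulVec (β • θ - μΓ))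
      = (1 - lam) • MΓ⁻¹.mulVec (LΓ.mulVec θ) + (β * lam) • (β • θ - μΓ) := by
  have hDunit : IsUnit D := by
    rw [hD, hMΩ, submatrix_diagonal _ _ Sum.inl_injective]
    exact isUnit_diagonal.2 <| Pi.isUnit_iff.2 fun _ => (hdΩ _).ne'.isUnit
  have hNμΓ :
      (D * A + D * C * MΓ⁻¹ * D) *ᵥ μΓ = -((D * B) *ᵥ μI) + (D * C * MΓ⁻¹) *ᵥ RΓ := by
    rw [← hNmat, hμΓ, mulVec_nonsing_inv_mulVec_s13 hNunit, hμI, ← mulVec_mulVec]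
  have hABC : A *ᵥ μΓ + B *ᵥ μI = C *ᵥ θ := by
    rw [hθ]; exact mulVec_add_mulVec_eq_of_schur_complement hDunit hNμΓ
  rw [hA, hB, hC] at hABC
  rw [hμ, restrΓ_mulVec_sum_elim]
  simp only [add_mulVec, smul_mulVec, one_mulVec, mulVec_add, mulVec_sub, mulVec_smul,
    mulVec_mulVec] at hABC ⊢
  linear_combination (norm := module) hABC

/-- the paper's verification, after eq. (5.16), that the
explicit Schur-complement expressions (5.13)–(5.15) for the discrete chemical
potentials `μ` and `θ` satisfy the compatibility condition (5.8). -/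
theorem schur_solution_satisfies_compatibility (nΓ nI : ℕ) (hnΓ : 1 ≤ nΓ)
    (β L lam : ℝ) (hβ : 0 < β) (hL : 0 ≤ L) (hlam : lam = 1 / (L + 1))
    (MΩ : Matrix (Fin nΓ ⊕ Fin nI) (Fin nΓ ⊕ Fin nI) ℝ)
    (dΩ : Fin nΓ ⊕ Fin nI → ℝ) (hdΩ : ∀ i, 0 < dΩ i) (hMΩ : MΩ = Matrix.diagonal dΩ)
    (MΓ : Matrix (Fin nΓ) (Fin nΓ) ℝ) (hMΓ : MΓ.PosDef)
    (LΩ : Matrix (Fin nΓ ⊕ Fin nI) (Fin nΓ ⊕ Fin nI) ℝ)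
    (LΓ : Matrix (Fin nΓ) (Fin nΓ) ℝ)
    -- boundary and interior blocks of the bulk mass matrix
    (D : Matrix (Fin nΓ) (Fin nΓ) ℝ) (hD : D = MΩ.submatrix Sum.inl Sum.inl)
    (DI : Matrix (Fin nI) (Fin nI) ℝ) (hDI : DI = MΩ.submatrix Sum.inr Sum.inr)
    -- the matrices A, B, C of the compatibility condition (5.9)–(5.10)
    (A : Matrix (Fin nΓ) (Fin nΓ) ℝ)
    (hA : A = (1 - lam) • (D⁻¹ * LΩ.submatrix Sum.inl Sum.inl)
        + lam • (D⁻¹ * MΓ) + (β * lam) • (1 : Matrix (Fin nΓ) (Fin nΓ) ℝ))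
    (B : Matrix (Fin nΓ) (Fin nI) ℝ)
    (hB : B = (1 - lam) • (D⁻¹ * LΩ.submatrix Sum.inl Sum.inr))
    (C : Matrix (Fin nΓ) (Fin nΓ) ℝ)
    (hC : C = (1 - lam) • (MΓ⁻¹ * LΓ) + (β * lam) • (D⁻¹ * MΓ)
        + (β ^ 2 * lam) • (1 : Matrix (Fin nΓ) (Fin nΓ) ℝ))
    -- the Schur complement N, assumed invertible
    (Nmat : Matrix (Fin nΓ) (Fin nΓ) ℝ)
    (hNmat : Nmat = D * A + D * C * MΓ⁻¹ * D) (hNunit : IsUnit Nmat)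
    -- right-hand sides and the explicit expressions for μ and θ
    (RΓ : Fin nΓ → ℝ) (RI : Fin nI → ℝ)
    (μΓ : Fin nΓ → ℝ)
    (hμΓ : μΓ = Nmat⁻¹.mulVec
        (-(D * B * DI⁻¹).mulVec RI + (D * C * MΓ⁻¹).mulVec RΓ))
    (μI : Fin nI → ℝ) (hμI : μI = DI⁻¹.mulVec RI)
    (μ : Fin nΓ ⊕ Fin nI → ℝ) (hμ : μ = Sum.elim μΓ μI)
    (θ : Fin nΓ → ℝ)
    (hθ : θ = -(MΓ⁻¹ * D).mulVec μΓ + MΓ⁻¹.mulVec RΓ) :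
    -- the compatibility condition (5.8)
    (1 - lam) • D⁻¹.mulVec (restrΓ (LΩ.mulVec μ))
        - lam • D⁻¹.mulVec (MΓ.mulVec (β • θ - μΓ))
      = (1 - lam) • MΓ⁻¹.mulVec (LΓ.mulVec θ) + (β * lam) • (β • θ - μΓ) :=
  schur_solution_satisfies_compatibility_general nΓ nI β lam MΩ dΩ hdΩ hMΩ MΓ LΩ LΓ D hD DI A hA B
    hB C hC Nmat hNmat hNunit RΓ RI μΓ hμΓ μI hμI μ hμ θ hθ
end
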